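/- Let F be a smooth function on an interval J with C₃/4 ≤ |F'''(y)| ≤ C₃ for all y ∈ J (so F''' has constant sign on J). For b ∈ ℝ define ψ(y) := (y − b/2)[F'(b−y) − F'(y) + (y − b/2)F''(y)] + F(y) + F(b−y), for those y with y ∈ J and b − y ∈ J. Then ψ'(y) = (y − b/2)[F''(y) − F''(b−y) + (y − b/2)F'''(y)], and moreover (3C₃/4)(y − b/2)² ≤ |ψ'(y)| ≤ 3C₃ (y − b/2)² for all such y. -/
import Mathlib


open Set

noncomputable section

/-- The auxiliary function
`ψ(y) = (y − b/2)[F'(b−y) − F'(y) + (y − b/2)F''(y)] + F(y) + F(b−y)`. -/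
def psiF (F : ℝ → ℝ) (b : ℝ) : ℝ → ℝ := fun y =>
  (y - b / 2) * (deriv F (b - y) - deriv F y + (y - b / 2) * deriv (deriv F) y) +
    F y + F (b - y)

/-- A continuous function nonvanishing on an order-connected set has constant sign there. -/
lemma same_sign_of_nonvanishing (g : ℝ → ℝ) (hg : Continuous g) (S : Set ℝ)
    (hS : S.OrdConnected) (h0 : ∀ x ∈ S, g x ≠ 0) {u v : ℝ} (hu : u ∈ S) (hv : v ∈ S) :
    0 < g u * g v := by
  rcases lt_or_ge 0 (g u * g v) with h | h
  · exact h
  · exfalso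
    have hmem : (0 : ℝ) ∈ uIcc (g u) (g v) := by
      rcases mul_nonpos_iff.mp h with ⟨h1, h2⟩ | ⟨h1, h2⟩
      · exact mem_uIcc.mpr (Or.inr ⟨h2, h1⟩)
      · exact mem_uIcc.mpr (Or.inl ⟨h1, h2⟩)
    obtain ⟨x, hx, hx0⟩ := intermediate_value_uIcc (hg.continuousOn (s := uIcc u v)) hmem
    exact h0 x (hS.uIcc_subset hu hv hx) hx0

/-- Mean value theorem on `uIcc`. -/
lemma mvt_uIcc (g g' : ℝ → ℝ) (hg : ∀ x, HasDerivAt g (g' x) x) {u v : ℝ} (h : u ≠ v) :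
    ∃ c ∈ uIcc u v, g v - g u = g' c * (v - u) := by
  rcases h.lt_or_gt with hlt | hlt
  · obtain ⟨c, hc, hc'⟩ := exists_hasDerivAt_eq_slope g g' hlt
      (fun x _ => (hg x).continuousAt.continuousWithinAt) (fun x _ => hg x)
    refine ⟨c, ?_, ?_⟩
    · rw [uIcc_of_le hlt.le]; exact Ioo_subset_Icc_self hc
    · rw [hc', div_mul_eq_mul_div, eq_div_iff (sub_ne_zero.mpr hlt.ne')]
      try ring
  · obtain ⟨c, hc, hc'⟩ := exists_hasDerivAt_eq_slope g g' hlt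
      (fun x _ => (hg x).continuousAt.continuousWithinAt) (fun x _ => hg x)
    refine ⟨c, ?_, ?_⟩
    · rw [uIcc_of_ge hlt.le]; exact Ioo_subset_Icc_self hc
    · rw [hc', div_mul_eq_mul_div, eq_div_iff (sub_ne_zero.mpr hlt.ne')]
      try ring

/-- The computation (5.4): `ψ'(y) = (y − b/2)[F''(y) − F''(b−y) + (y − b/2)F'''(y)]`,
and consequently `|ψ'(y)| ∼ C₃ (y − b/2)²` whenever `y` and `b − y` lie in the interval
`J` on which `C₃/4 ≤ |F'''| ≤ C₃`. -/
theorem psi_derivative (C₃ : ℝ) (hC₃ : 0 < C₃) (J : Set ℝ) (hJ : J.OrdConnected)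
    (F : ℝ → ℝ) (hF : ContDiff ℝ (⊤ : ℕ∞) F)
    (hF3 : ∀ y ∈ J, C₃ / 4 ≤ |deriv (deriv (deriv F)) y| ∧ |deriv (deriv (deriv F)) y| ≤ C₃)
    (b y : ℝ) (hy : y ∈ J) (hby : b - y ∈ J) :
    deriv (psiF F b) y
      = (y - b / 2) *
          (deriv (deriv F) y - deriv (deriv F) (b - y) +
            (y - b / 2) * deriv (deriv (deriv F)) y) ∧
    3 * C₃ / 4 * (y - b / 2) ^ 2 ≤ |deriv (psiF F b) y| ∧
    |deriv (psiF F b) y| ≤ 3 * C₃ * (y - b / 2) ^ 2 := by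
  set f1 := deriv F with hf1
  set f2 := deriv f1 with hf2
  set f3 := deriv f2 with hf3
  have hF1 : ContDiff ℝ (⊤ : ℕ∞) f1 := (contDiff_infty_iff_deriv.mp hF).2
  have hF2 : ContDiff ℝ (⊤ : ℕ∞) f2 := (contDiff_infty_iff_deriv.mp hF1).2
  have hF3' : ContDiff ℝ (⊤ : ℕ∞) f3 := (contDiff_infty_iff_deriv.mp hF2).2
  have dF : ∀ x, HasDerivAt F (f1 x) x := fun x =>
    (hF.differentiable (by norm_num) x).hasDerivAt
  have dF1 : ∀ x, HasDerivAt f1 (f2 x) x := fun x =>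
    (hF1.differentiable (by norm_num) x).hasDerivAt
  have dF2 : ∀ x, HasDerivAt f2 (f3 x) x := fun x =>
    (hF2.differentiable (by norm_num) x).hasDerivAt
  -- derivative computation
  have key : deriv (psiF F b) y
      = (y - b / 2) * (f2 y - f2 (b - y) + (y - b / 2) * f3 y) := by
    have hlin : HasDerivAt (fun x : ℝ => x - b / 2) 1 y := (hasDerivAt_id y).sub_const _
    have hneg : HasDerivAt (fun x : ℝ => b - x) (-1) y := (hasDerivAt_id y).const_sub b
    have h1 : HasDerivAt (fun x => f1 (b - x)) (f2 (b - y) * (-1)) y :=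
      (dF1 (b - y)).comp y hneg
    have h2 : HasDerivAt (fun x => F (b - x)) (f1 (b - y) * (-1)) y :=
      (dF (b - y)).comp y hneg
    have hinner : HasDerivAt
        (fun x => f1 (b - x) - f1 x + (x - b / 2) * f2 x)
        (f2 (b - y) * (-1) - f2 y + (1 * f2 y + (y - b / 2) * f3 y)) y :=
      ((h1.sub (dF1 y)).add ((hlin.mul (dF2 y))))
    have hbig : HasDerivAt (psiF F b)
        ((1 * (f1 (b - y) - f1 y + (y - b / 2) * f2 y) +
          (y - b / 2) * (f2 (b - y) * (-1) - f2 y + (1 * f2 y + (y - b / 2) * f3 y))) +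
          f1 y + f1 (b - y) * (-1)) y := by
      exact ((hlin.mul hinner).add (dF y)).add h2
    rw [hbig.deriv]; ring
  refine ⟨key, ?_⟩
  rcases eq_or_ne y (b / 2) with hyb | hyb
  · rw [key, hyb]
    simp
  · have hne : y ≠ b - y := fun h => hyb (by linarith [h])
    obtain ⟨ξ, hξmem, hξ⟩ := mvt_uIcc f2 f3 dF2 (Ne.symm hne)
    have hξJ : ξ ∈ J := hJ.uIcc_subset hby hy hξmem
    have hval : deriv (psiF F b) y = (y - b / 2) ^ 2 * (2 * f3 ξ + f3 y) := by
      rw [key, hξ]; ring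
    have hsign : 0 < f3 ξ * f3 y := by
      refine same_sign_of_nonvanishing f3 (hF3'.continuous) J hJ ?_ hξJ hy
      intro x hx hx0
      have := (hF3 x hx).1
      rw [hx0] at this
      simp at this
      linarith
    obtain ⟨hξlo, hξhi⟩ := hF3 ξ hξJ
    obtain ⟨hylo, hyhi⟩ := hF3 y hy
    have hξne : f3 ξ ≠ 0 := by
      intro h
      rw [h, zero_mul] at hsign
      exact lt_irrefl 0 hsign
    have habs : |2 * f3 ξ + f3 y| = 2 * |f3 ξ| + |f3 y| := by
      rcases lt_or_gt_of_ne hξne with hneg | hpos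
      · have hty : f3 y < 0 := by nlinarith
        rw [abs_of_nonpos (by linarith), abs_of_neg hneg, abs_of_neg hty]; ring
      · have hty : 0 < f3 y := by nlinarith
        rw [abs_of_pos (by linarith), abs_of_pos hpos, abs_of_pos hty]
    have hsq : (0:ℝ) ≤ (y - b / 2) ^ 2 := sq_nonneg _
    rw [hval, abs_mul, abs_of_nonneg hsq, habs]
    constructor
    · calc 3 * C₃ / 4 * (y - b / 2) ^ 2 ≤ (y - b / 2) ^ 2 * (2 * (C₃ / 4) + C₃ / 4) := by ring_nf; nlinarith
        _ ≤ (y - b / 2) ^ 2 * (2 * |f3 ξ| + |f3 y|) := by nlinarith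
    · calc (y - b / 2) ^ 2 * (2 * |f3 ξ| + |f3 y|) ≤ (y - b / 2) ^ 2 * (2 * C₃ + C₃) := by nlinarith
        _ = 3 * C₃ * (y - b / 2) ^ 2 := by ring
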